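/- arXiv:2401.02609 — 3 statements merged into one kernel-verified Lean document; each statement's English description precedes it below -/
import Mathlib

section
/- Let a_1,…,a_N and b_1,…,b_N be strictly positive real weights, and let S_1,…,S_N be i.i.d. Exponential(1) random variables. Define U_p = argmin_{1≤i≤N} S_i/a_i and U_q = argmin_{1≤i≤N} S_i/b_i. Then for every k ∈ {1,…,N}, Pr(U_p ≠ U_q | U_p = k) ≤ 1 − (1 + (a_k / Σ_{j=1}^N a_j) · (Σ_{j=1}^N b_j) / b_k)^{-1}. (In particular, writing λ_i^p = a_i/Σ_j a_j and λ_i^q = b_i/Σ_j b_j, the bound reads Pr(U_p ≠ U_q | U_p = k) ≤ 1 − (1 + λ_k^p/λ_k^q)^{-1}.) -/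
/-!
Conditionally on `S k = x`, the events `{x < d j * S j}` are independent with probabilities
`exp (-x / d j)`, so `P(∀ j ≠ k, S k < d j * S j) = E[exp (-r * S k)] = 1 / (1 + r)` with
`r = ∑ j, 1 / d j`. Taking `d j = a k / a j` gives `P(Up = k) = λₖᵖ`; taking
`d j = min (a k / a j) (b k / b j)` gives `P(Up = k ∧ Uq = k) ≥ (1 / λₖᵖ + 1 / λₖ^q)⁻¹`.
Dividing, `P(Uq = k ∣ Up = k) ≥ (1 + λₖᵖ / λₖ^q)⁻¹`, and on `{Up = k}` the event `Up ≠ Uq`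
is `Uq ≠ k`.
-/

open MeasureTheory ProbabilityTheory Set
open scoped ENNReal

section WeightArithmetic

lemma le_div_mul_of_div_le_div {x y v w : ℝ} (hv : 0 < v) (hw : 0 < w) (h : x / v ≤ y / w) :
    x ≤ v / w * y := by
  rw [div_le_div_iff₀ hv hw] at h
  rw [div_mul_eq_mul_div, le_div_iff₀ hw]
  linarith

variable {ι : Type*}

lemma eq_of_lt_div_mul {s w : ι → ℝ} (hw : ∀ i, 0 < w i) {u k : ι} (hu : s u / w u ≤ s k / w k)
    (hk : u ≠ k → s k < w k / w u * s u) : u = k := by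
  by_contra h
  have hlt := hk h
  rw [div_le_div_iff₀ (hw u) (hw k)] at hu
  rw [div_mul_eq_mul_div, lt_div_iff₀ (hw u)] at hlt
  linarith

variable [Fintype ι] [DecidableEq ι]

lemma inv_one_add_sum_erase_inv_div {w : ι → ℝ} (hw : ∀ i, 0 < w i) (k : ι) :
    (1 + ∑ j ∈ Finset.univ.erase k, (w k / w j)⁻¹)⁻¹ = w k / ∑ j, w j := by
  simp_rw [inv_div]
  rw [← Finset.sum_div, ← div_self (hw k).ne', ← add_div,
    Finset.add_sum_erase _ _ (Finset.mem_univ k), inv_div]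

lemma inv_sum_div_add_sum_div_le {a b : ι → ℝ} (ha : ∀ i, 0 < a i) (hb : ∀ i, 0 < b i) (k : ι) :
    (∑ j, a j / a k + ∑ j, b j / b k)⁻¹
      ≤ (1 + ∑ j ∈ Finset.univ.erase k, (min (a k / a j) (b k / b j))⁻¹)⁻¹ := by
  have hterm : ∀ j, (min (a k / a j) (b k / b j))⁻¹ ≤ a j / a k + b j / b k := fun j => by
    have := div_pos (ha j) (ha k)
    have := div_pos (hb j) (hb k)
    rcases min_choice (a k / a j) (b k / b j) with h | h <;> rw [h, inv_div] <;> linarith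
  have hsum := Finset.sum_le_sum fun j (_ : j ∈ Finset.univ.erase k) => hterm j
  have hsplit := Finset.add_sum_erase Finset.univ (fun j => a j / a k + b j / b k)
    (Finset.mem_univ k)
  rw [div_self (ha k).ne', div_self (hb k).ne'] at hsplit
  simp only [Finset.sum_add_distrib] at hsplit hsum
  refine inv_anti₀ (add_pos_of_pos_of_nonneg one_pos (Finset.sum_nonneg fun j _ => ?_)) ?_
  · exact inv_nonneg.mpr (le_min (div_pos (ha k) (ha j)).le (div_pos (hb k) (hb j)).le)
  · linarith

end WeightArithmetic

namespace ProbabilityTheory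

instance (r : ℝ) : NullSingletonClass (expMeasure r) := by
  unfold expMeasure gammaMeasure; infer_instance

lemma expMeasure_Iio_zero (r : ℝ) : expMeasure r (Iio 0) = 0 := by
  rw [expMeasure, gammaMeasure, withDensity_apply _ measurableSet_Iio]
  exact lintegral_exponentialPDF_of_nonpos le_rfl

lemma expMeasure_Ioi {r : ℝ} (hr : 0 < r) {c : ℝ} (hc : 0 ≤ c) :
    expMeasure r (Ioi c) = ENNReal.ofReal (Real.exp (-(r * c))) := by
  have := isProbabilityMeasure_expMeasure hr
  have hexp : Real.exp (-(r * c)) ≤ 1 := Real.exp_le_one_iff.mpr (by nlinarith)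
  rw [← compl_Iic, prob_compl_eq_one_sub measurableSet_Iic, ← ofReal_cdf, cdf_expMeasure_eq hr,
    if_pos hc, ← ENNReal.ofReal_one, ← ENNReal.ofReal_sub _ (by linarith), sub_sub_cancel]

lemma lintegral_expMeasure_of_eq_exp_neg_mul {s r : ℝ} (hs : 0 < s) (hr : 0 ≤ r)
    {F : ℝ → ℝ≥0∞} (hF : Measurable F)
    (hFr : ∀ x, 0 ≤ x → F x = ENNReal.ofReal (Real.exp (-(r * x)))) :
    ∫⁻ x, F x ∂expMeasure s = ENNReal.ofReal (s / (s + r)) := by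
  have hsr : 0 < s + r := by linarith
  have hdens : ∀ x, exponentialPDF s x * F x
      = ENNReal.ofReal (s / (s + r)) * exponentialPDF (s + r) x := by
    intro x
    rcases lt_or_ge x 0 with hx | hx
    · simp [exponentialPDF_of_neg hx]
    rw [exponentialPDF_of_nonneg hx, exponentialPDF_of_nonneg hx, hFr x hx,
      ← ENNReal.ofReal_mul (by positivity), ← ENNReal.ofReal_mul (by positivity),
      ← mul_assoc, div_mul_cancel₀ _ hsr.ne', mul_assoc, ← Real.exp_add]
    ring_nf
  have hpdf (t : ℝ) : Measurable (exponentialPDF t) :=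
    (measurable_exponentialPDFReal t).ennreal_ofReal
  change ∫⁻ x, F x ∂volume.withDensity (exponentialPDF s) = _
  rw [lintegral_withDensity_eq_lintegral_mul _ (hpdf s) hF]
  simp only [Pi.mul_apply, hdens]
  rw [lintegral_const_mul _ (hpdf _),
    lintegral_exponentialPDF_eq_one hsr, mul_one]

section Independence

variable {Ω α β : Type*} [MeasurableSpace Ω] [MeasurableSpace α] [MeasurableSpace β]
  {μ : Measure Ω} [IsFiniteMeasure μ]

lemma IndepFun.measure_mem_eq_lintegral {X : Ω → α} {Y : Ω → β} (hXY : IndepFun X Y μ)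
    (hX : Measurable X) (hY : Measurable Y) {R : Set (α × β)} (hR : MeasurableSet R) :
    μ {ω | (X ω, Y ω) ∈ R} = ∫⁻ x, μ.map Y {y | (x, y) ∈ R} ∂μ.map X := by
  calc μ {ω | (X ω, Y ω) ∈ R} = μ.map (fun ω => (X ω, Y ω)) R :=
        (Measure.map_apply (hX.prodMk hY) hR).symm
    _ = _ := by
        rw [(indepFun_iff_map_prod_eq_prod_map_map hX.aemeasurable hY.aemeasurable).mp hXY,
          Measure.prod_apply hR]
        rfl

lemma IndepFun.measure_eq_eq_zero [MeasurableEq α] {X Y : Ω → α} (hXY : IndepFun X Y μ)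
    (hX : Measurable X) (hY : Measurable Y) [NullSingletonClass (μ.map X)] :
    μ {ω | X ω = Y ω} = 0 := by
  change μ {ω | (Y ω, X ω) ∈ {p : α × α | p.2 = p.1}} = 0
  rw [hXY.symm.measure_mem_eq_lintegral hY hX (measurableSet_eq_fun measurable_snd measurable_fst)]
  exact (lintegral_congr fun y => measure_singleton (μ := μ.map X) y).trans lintegral_zero

end Independence

section ExponentialRace

variable {Ω ι : Type*} [MeasurableSpace Ω] {μ : Measure Ω}

lemma measure_lt_mul_of_map_eq_expMeasure {X : Ω → ℝ} (hX : Measurable X)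
    (hlaw : μ.map X = expMeasure 1) {d x : ℝ} (hd : 0 < d) (hx : 0 ≤ x) :
    μ {ω | x < d * X ω} = ENNReal.ofReal (Real.exp (-(d⁻¹ * x))) := by
  have hset : {ω | x < d * X ω} = X ⁻¹' Ioi (d⁻¹ * x) := by
    ext ω
    simp [inv_mul_eq_div, div_lt_iff₀' hd]
  rw [hset, ← Measure.map_apply hX measurableSet_Ioi, hlaw, expMeasure_Ioi one_pos (by positivity),
    one_mul]

variable {S : ι → Ω → ℝ}

lemma iIndepFun.measure_forall_lt_mul_eq_exp (hS : iIndepFun S μ)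
    (hmeas : ∀ i, Measurable (S i)) (hlaw : ∀ i, μ.map (S i) = expMeasure 1) {t : Finset ι}
    {d : ι → ℝ} (hd : ∀ j ∈ t, 0 < d j) {x : ℝ} (hx : 0 ≤ x) :
    μ {ω | ∀ j ∈ t, x < d j * S j ω}
      = ENNReal.ofReal (Real.exp (-((∑ j ∈ t, (d j)⁻¹) * x))) := by
  have hmeasj : ∀ j ∈ t, MeasurableSet[MeasurableSpace.comap (S j) inferInstance]
      {ω | x < d j * S j ω} := fun j _ =>
    ⟨{y | x < d j * y}, measurableSet_lt measurable_const (measurable_const_mul _), rfl⟩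
  rw [show {ω | ∀ j ∈ t, x < d j * S j ω} = ⋂ j ∈ t, {ω | x < d j * S j ω} by ext; simp,
    hS.meas_biInter hmeasj, Finset.prod_congr rfl fun j hj =>
      measure_lt_mul_of_map_eq_expMeasure (hmeas j) (hlaw j) (hd j hj) hx,
    ← ENNReal.ofReal_prod_of_nonneg fun j _ => (Real.exp_pos _).le, ← Real.exp_sum]
  simp [Finset.sum_mul]

variable [IsProbabilityMeasure μ]

lemma iIndepFun.measure_forall_lt_mul (hS : iIndepFun S μ) (hmeas : ∀ i, Measurable (S i))
    (hlaw : ∀ i, μ.map (S i) = expMeasure 1) {k : ι} {t : Finset ι} (hkt : k ∉ t) {d : ι → ℝ}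
    (hd : ∀ j ∈ t, 0 < d j) :
    μ {ω | ∀ j ∈ t, S k ω < d j * S j ω} = ENNReal.ofReal (1 + ∑ j ∈ t, (d j)⁻¹)⁻¹ := by
  have hr : 0 ≤ ∑ j ∈ t, (d j)⁻¹ := Finset.sum_nonneg fun j hj => (inv_pos.mpr (hd j hj)).le
  have hind : IndepFun (S k) (fun ω (j : t) => S j ω) μ := by
    have := (hS.indepFun_finset {k} t (Finset.disjoint_singleton_left.mpr hkt) hmeas).comp
      (measurable_pi_apply ⟨k, Finset.mem_singleton_self k⟩) measurable_id
    exact this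
  have hR : MeasurableSet {p : ℝ × (t → ℝ) | ∀ j : t, p.1 < d j * p.2 j} := by
    simp only [ofPred_forall]
    exact MeasurableSet.iInter fun j => measurableSet_lt measurable_fst
      (((measurable_pi_apply j).comp measurable_snd).const_mul _)
  have hY : Measurable fun ω (j : t) => S j ω := by fun_prop
  rw [show {ω | ∀ j ∈ t, S k ω < d j * S j ω}
      = {ω | (S k ω, fun j : t => S j ω) ∈ {p : ℝ × (t → ℝ) | ∀ j : t, p.1 < d j * p.2 j}}
      by ext; simp,
    hind.measure_mem_eq_lintegral (hmeas k) hY hR, hlaw k, ← one_div]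
  refine lintegral_expMeasure_of_eq_exp_neg_mul one_pos hr (measurable_measure_prodMk_left hR)
    fun x hx => ?_
  refine (Measure.map_apply hY (measurable_prodMk_left hR)).trans ?_
  rw [← hS.measure_forall_lt_mul_eq_exp hmeas hlaw hd hx]
  congr 1
  ext
  simp

lemma iIndepFun.measure_forall_le_mul (hS : iIndepFun S μ) (hmeas : ∀ i, Measurable (S i))
    (hlaw : ∀ i, μ.map (S i) = expMeasure 1) {k : ι} {t : Finset ι} (hkt : k ∉ t) {d : ι → ℝ}
    (hd : ∀ j ∈ t, 0 < d j) :
    μ {ω | ∀ j ∈ t, S k ω ≤ d j * S j ω} = ENNReal.ofReal (1 + ∑ j ∈ t, (d j)⁻¹)⁻¹ := by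
  have : NullSingletonClass (μ.map (S k)) := by rw [hlaw k]; infer_instance
  have hties : ∀ j ∈ t, ∀ᵐ ω ∂μ, S k ω ≠ d j * S j ω := fun j hj => by
    have hkj : k ≠ j := fun h => hkt (h ▸ hj)
    have hind : IndepFun (S k) (fun ω => d j * S j ω) μ :=
      (hS.indepFun hkj).comp measurable_id (measurable_const_mul (d j))
    exact ae_iff.mpr (by simpa using hind.measure_eq_eq_zero (hmeas k) ((hmeas j).const_mul _))
  rw [← hS.measure_forall_lt_mul hmeas hlaw hkt hd]
  refine measure_congr ?_
  filter_upwards [(Filter.eventually_all_finset t).mpr hties] with ω hω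
  exact propext (forall₂_congr fun j hj => ⟨fun h => h.lt_of_ne (hω j hj), le_of_lt⟩)

end ExponentialRace

section Argmin

variable {ι Ω : Type*} [Fintype ι] [DecidableEq ι] [MeasurableSpace Ω] {μ : Measure Ω}
  [IsProbabilityMeasure μ] {S : ι → Ω → ℝ}

lemma iIndepFun.measure_argmin_eq_div_sum (hS : iIndepFun S μ) (hmeas : ∀ i, Measurable (S i))
    (hlaw : ∀ i, μ.map (S i) = expMeasure 1) {w : ι → ℝ} (hw : ∀ i, 0 < w i) {U : Ω → ι}
    (hU : ∀ ω j, S (U ω) ω / w (U ω) ≤ S j ω / w j) (k : ι) :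
    μ {ω | U ω = k} = ENNReal.ofReal (w k / ∑ j, w j) := by
  have hkt : k ∉ Finset.univ.erase k := Finset.notMem_erase k _
  have hd : ∀ j ∈ Finset.univ.erase k, 0 < w k / w j := fun j _ => div_pos (hw k) (hw j)
  rw [← inv_one_add_sum_erase_inv_div hw k]
  apply le_antisymm
  · rw [← hS.measure_forall_le_mul hmeas hlaw hkt hd]
    refine measure_mono fun ω (hω : U ω = k) j _ => ?_
    exact le_div_mul_of_div_le_div (hw k) (hw j) (hω ▸ hU ω j)
  · rw [← hS.measure_forall_lt_mul hmeas hlaw hkt hd]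
    exact measure_mono fun ω hω => eq_of_lt_div_mul (s := fun i => S i ω) hw (hU ω k) fun h =>
      hω (U ω) (Finset.mem_erase.mpr ⟨h, Finset.mem_univ _⟩)

lemma iIndepFun.ofReal_le_measure_argmin_inter (hS : iIndepFun S μ)
    (hmeas : ∀ i, Measurable (S i)) (hlaw : ∀ i, μ.map (S i) = expMeasure 1) {a b : ι → ℝ}
    (ha : ∀ i, 0 < a i) (hb : ∀ i, 0 < b i) {U V : Ω → ι}
    (hU : ∀ ω j, S (U ω) ω / a (U ω) ≤ S j ω / a j)
    (hV : ∀ ω j, S (V ω) ω / b (V ω) ≤ S j ω / b j) (k : ι) :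
    ENNReal.ofReal (∑ j, a j / a k + ∑ j, b j / b k)⁻¹ ≤ μ ({ω | U ω = k} ∩ {ω | V ω = k}) := by
  -- where `S ≥ 0`, beating every `c j * S j` means winning both races
  set c : ι → ℝ := fun j => min (a k / a j) (b k / b j)
  have hc : ∀ j ∈ Finset.univ.erase k, 0 < c j :=
    fun j _ => lt_min (div_pos (ha k) (ha j)) (div_pos (hb k) (hb j))
  have hnonneg : ∀ᵐ ω ∂μ, ∀ j, 0 ≤ S j ω := ae_all_iff.mpr fun j => by
    refine ae_of_ae_map (hmeas j).aemeasurable ?_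
    rw [hlaw j, ae_iff]
    exact measure_mono_null (fun x hx => not_le.mp hx) (expMeasure_Iio_zero 1)
  calc ENNReal.ofReal (∑ j, a j / a k + ∑ j, b j / b k)⁻¹
      ≤ ENNReal.ofReal (1 + ∑ j ∈ Finset.univ.erase k, (c j)⁻¹)⁻¹ :=
        ENNReal.ofReal_le_ofReal (inv_sum_div_add_sum_div_le ha hb k)
    _ = μ {ω | ∀ j ∈ Finset.univ.erase k, S k ω < c j * S j ω} :=
        (hS.measure_forall_lt_mul hmeas hlaw (Finset.notMem_erase k _) hc).symm
    _ ≤ μ ({ω | U ω = k} ∩ {ω | V ω = k}) := by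
        refine measure_mono_ae ?_
        filter_upwards [hnonneg] with ω hω hlt
        have hlt' : ∀ j ≠ k, S k ω < c j * S j ω :=
          fun j hj => hlt j (Finset.mem_erase.mpr ⟨hj, Finset.mem_univ _⟩)
        exact ⟨eq_of_lt_div_mul (s := fun i => S i ω) ha (hU ω k) fun h => (hlt' _ h).trans_le
            (mul_le_mul_of_nonneg_right (min_le_left _ _) (hω _)),
          eq_of_lt_div_mul (s := fun i => S i ω) hb (hV ω k) fun h => (hlt' _ h).trans_le
            (mul_le_mul_of_nonneg_right (min_le_right _ _) (hω _))⟩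

end Argmin

lemma ofReal_div_le_cond_apply {Ω : Type*} [MeasurableSpace Ω] {μ : Measure Ω} {s t : Set Ω}
    (hs : MeasurableSet s) {p e : ℝ} (hp : 0 < p) (hμs : μ s ≤ ENNReal.ofReal p)
    (hμst : ENNReal.ofReal e ≤ μ (s ∩ t)) : ENNReal.ofReal (e / p) ≤ μ[t | s] := by
  rw [cond_apply hs, div_eq_inv_mul, ENNReal.ofReal_mul (inv_nonneg.mpr hp.le),
    ENNReal.ofReal_inv_of_pos hp]
  exact mul_le_mul' (ENNReal.inv_le_inv.mpr hμs) hμst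

end ProbabilityTheory

/-- finite-alphabet importance matching lemma.
If `S₁,…,S_N` are i.i.d. `Exponential(1)` random variables, `a`, `b` are strictly positive
weight vectors, and `Up`, `Uq` are the argmins of `Sᵢ/aᵢ` and `Sᵢ/bᵢ` respectively, then
for every `k`, `Pr(Up ≠ Uq ∣ Up = k) ≤ 1 − (1 + (a k/∑ a j) ⬝ (∑ b j)/b k)⁻¹`. -/
theorem stmt0
    {Ω : Type*} [MeasurableSpace Ω] (μ : Measure Ω) [IsProbabilityMeasure μ]
    (N : ℕ) (a b : Fin N → ℝ) (ha : ∀ i, 0 < a i) (hb : ∀ i, 0 < b i)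
    (S : Fin N → Ω → ℝ) (hSmeas : ∀ i, Measurable (S i))
    (hSindep : iIndepFun S μ)
    (hSlaw : ∀ i, μ.map (S i) = expMeasure 1)
    (Up Uq : Ω → Fin N) (hUpmeas : Measurable Up) (hUqmeas : Measurable Uq)
    (hUp : ∀ ω j, S (Up ω) ω / a (Up ω) ≤ S j ω / a j)
    (hUq : ∀ ω j, S (Uq ω) ω / b (Uq ω) ≤ S j ω / b j)
    (k : Fin N) :
    μ[|{ω | Up ω = k}] {ω | Up ω ≠ Uq ω}
      ≤ ENNReal.ofReal (1 - (1 + (a k / ∑ j, a j) * (∑ j, b j) / b k)⁻¹) := by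
  set q := (1 + (a k / ∑ j, a j) * (∑ j, b j) / b k)⁻¹ with hq_def
  have hA : 0 < ∑ j, a j := Finset.sum_pos (fun i _ => ha i) ⟨k, Finset.mem_univ k⟩
  have hB : 0 < ∑ j, b j := Finset.sum_pos (fun i _ => hb i) ⟨k, Finset.mem_univ k⟩
  have hak := ha k
  have hbk := hb k
  have hq : 0 ≤ q := inv_nonneg.mpr (by positivity)
  have hUpk : MeasurableSet {ω | Up ω = k} := hUpmeas (measurableSet_singleton k)
  have hagree : ENNReal.ofReal q ≤ μ[{ω | Uq ω = k} | {ω | Up ω = k}] := by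
    convert ofReal_div_le_cond_apply hUpk (div_pos (ha k) hA)
      (hSindep.measure_argmin_eq_div_sum hSmeas hSlaw ha hUp k).le
      (hSindep.ofReal_le_measure_argmin_inter hSmeas hSlaw ha hb hUp hUq k) using 2
    rw [← Finset.sum_div, ← Finset.sum_div, hq_def]
    field_simp
  calc μ[|{ω | Up ω = k}] {ω | Up ω ≠ Uq ω}
      = μ[|{ω | Up ω = k}] ({ω | Up ω = k} ∩ {ω | Up ω ≠ Uq ω}) := (cond_inter_self hUpk _ _).symm
    _ ≤ μ[|{ω | Up ω = k}] {ω | Uq ω = k}ᶜ :=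
        measure_mono fun ω ⟨hUpω, hne⟩ hUqω => hne (hUpω.trans hUqω.symm)
    _ ≤ 1 - ENNReal.ofReal q :=
        prob_compl_le_one_sub_of_le_prob hagree (hUqmeas (measurableSet_singleton k))
    _ = ENNReal.ofReal (1 - q) := by rw [ENNReal.ofReal_sub 1 hq, ENNReal.ofReal_one]
end

section
/- Let P be a probability measure on a measurable space 𝒴 and λ, β : 𝒴 → (0, ω] measurable with ∫λ dP = ∫β dP = 1. Let Y_2,…,Y_N be i.i.d. with law P and fix y₁ ∈ 𝒴 with λ(y₁) > 0 (writing Y_1 = y₁). Then for any 0 < ε < 1: E[ (Σ_{j=1}^N β(Y_j)) / (Σ_{j=1}^N λ(Y_j))² ] ≤ (β(y₁) + (N−1)(1+ε)) / (λ(y₁) + (N−1)(1−ε))² + (Nω/λ(y₁)²)·2·exp(−(N−1)ε²/ω²). -/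
/-!
Hoeffding's inequality, applied to the bounded variables `λ(Yⱼ)` and `β(Yⱼ)` of mean one, shows
that outside an event of probability at most `2 exp(-(N-1)ε²/ω²)` one has
`∑ λ(Yⱼ) ≥ λ(y₁) + (N-1)(1-ε)` and `∑ β(Yⱼ) ≤ β(y₁) + (N-1)(1+ε)`, which bounds the ratio by
the first term. On that exceptional event the ratio is still at most `Nω / λ(y₁)²`, since every
`β(Yⱼ) ≤ ω` and the denominator is at least `λ(y₁)²`.
-/

open MeasureTheory ProbabilityTheory

section Hoeffding

variable {𝒴 : Type*} [MeasurableSpace 𝒴] (P : Measure 𝒴) [IsProbabilityMeasure P]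
  {f : 𝒴 → ℝ} {a b : ℝ}

theorem measureReal_sum_sub_integral_ge_le {ι : Type*} [Fintype ι] (hf : Measurable f)
    (hab : ∀ y, f y ∈ Set.Icc a b) {t : ℝ} (ht : 0 ≤ t) :
    (Measure.pi fun _ : ι => P).real {x | t ≤ ∑ i, (f (x i) - ∫ y, f y ∂P)}
      ≤ Real.exp (-2 * t ^ 2 / (Fintype.card ι * (b - a) ^ 2)) := by
  have hsubG : HasSubgaussianMGF (fun y => f y - ∫ y, f y ∂P) ((‖b - a‖₊ / 2) ^ 2) P :=
    hasSubgaussianMGF_of_mem_Icc hf.aemeasurable (ae_of_all _ hab)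
  have hcoord (i : ι) : HasSubgaussianMGF (fun x : ι → 𝒴 => f (x i) - ∫ y, f y ∂P)
      ((‖b - a‖₊ / 2) ^ 2) (Measure.pi fun _ : ι => P) :=
    .of_map (measurable_pi_apply i).aemeasurable
      (by rwa [(measurePreserving_eval (fun _ : ι => P) i).map_eq])
  have hindep : iIndepFun (fun i (x : ι → 𝒴) => f (x i) - ∫ y, f y ∂P)
      (Measure.pi fun _ : ι => P) :=
    iIndepFun_pi (X := fun _ y => f y - ∫ y, f y ∂P) fun _ => by fun_prop
  refine (HasSubgaussianMGF.measure_sum_ge_le_of_iIndepFun hindep (s := Finset.univ)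
    (fun i _ => hcoord i) ht).trans_eq ?_
  simp only [div_pow, Finset.sum_const, Finset.card_univ, nsmul_eq_mul, NNReal.coe_mul,
    NNReal.coe_natCast, NNReal.coe_div, NNReal.coe_pow, coe_nnnorm, Real.norm_eq_abs, sq_abs,
    NNReal.coe_ofNat, Real.exp_eq_exp]
  generalize b - a = d
  ring

theorem measure_sum_ge_add_le (hf : Measurable f) (hab : ∀ y, f y ∈ Set.Icc a b) (n : ℕ)
    {ε : ℝ} (hε : 0 ≤ ε) :
    (Measure.pi fun _ : Fin n => P) {x | n * (∫ y, f y ∂P + ε) ≤ ∑ i, f (x i)}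
      ≤ ENNReal.ofReal (Real.exp (-(n * ε ^ 2 / (b - a) ^ 2))) := by
  have hset : {x : Fin n → 𝒴 | n * (∫ y, f y ∂P + ε) ≤ ∑ i, f (x i)}
      = {x | n * ε ≤ ∑ i, (f (x i) - ∫ y, f y ∂P)} := by
    ext x
    simp only [Set.mem_ofPred_eq, Finset.sum_sub_distrib, Finset.sum_const, Finset.card_univ,
      Fintype.card_fin, nsmul_eq_mul]
    constructor <;> intro h <;> linarith
  rw [hset, ← ofReal_measureReal]
  refine ENNReal.ofReal_le_ofReal ((measureReal_sum_sub_integral_ge_le P hf hab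
    (by positivity)).trans (Real.exp_le_exp.2 ?_))
  rcases n.eq_zero_or_pos with rfl | hn
  · simp
  · have hcancel : -2 * (n * ε) ^ 2 / (n * (b - a) ^ 2) = 2 * -(n * ε ^ 2 / (b - a) ^ 2) := by
      field_simp
    have hnonneg : 0 ≤ n * ε ^ 2 / (b - a) ^ 2 := by positivity
    rw [Fintype.card_fin, hcancel]
    linarith

theorem measure_sum_le_sub_le (hf : Measurable f) (hab : ∀ y, f y ∈ Set.Icc a b) (n : ℕ)
    {ε : ℝ} (hε : 0 ≤ ε) :
    (Measure.pi fun _ : Fin n => P) {x | ∑ i, f (x i) ≤ n * (∫ y, f y ∂P - ε)}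
      ≤ ENNReal.ofReal (Real.exp (-(n * ε ^ 2 / (b - a) ^ 2))) := by
  have hneg := measure_sum_ge_add_le P hf.neg
    (fun y => ⟨neg_le_neg (hab y).2, neg_le_neg (hab y).1⟩) n hε
  rw [show -a - -b = b - a by ring] at hneg
  refine (measure_mono fun x hx => ?_).trans hneg
  simp only [Set.mem_ofPred_eq, Pi.neg_apply, integral_neg, Finset.sum_neg_distrib] at hx ⊢
  linarith

end Hoeffding

theorem lintegral_le_add_mul_measure {α : Type*} [MeasurableSpace α] {μ : Measure α}
    [IsProbabilityMeasure μ] {f : α → ENNReal} {s : Set α} {c C : ENNReal}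
    (hc : ∀ x ∉ s, f x ≤ c) (hC : ∀ x, f x ≤ C) :
    ∫⁻ x, f x ∂μ ≤ c + C * μ s := by
  have hf : ∀ x, f x ≤ c + s.indicator (fun _ => C) x := by
    intro x
    by_cases hx : x ∈ s
    · simpa [hx] using (hC x).trans le_add_self
    · simpa [hx] using hc x hx
  calc ∫⁻ x, f x ∂μ ≤ ∫⁻ x, (c + s.indicator (fun _ => C) x) ∂μ := lintegral_mono hf
    _ = c + ∫⁻ x, s.indicator (fun _ => C) x ∂μ := by
      rw [lintegral_add_left measurable_const, lintegral_const, measure_univ, mul_one]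
    _ ≤ c + C * μ s := by gcongr; exact lintegral_indicator_const_le s C

theorem div_sq_le_div_sq {p q r s : ℝ} (hr : 0 ≤ r) (hs : 0 < s) (hpr : p ≤ r) (hsq : s ≤ q) :
    p / q ^ 2 ≤ r / s ^ 2 :=
  div_le_div₀ hr hpr (by positivity) (pow_le_pow_left₀ hs.le hsq 2)

theorem measure_sum_deviation_le {𝒴 : Type*} [MeasurableSpace 𝒴] (P : Measure 𝒴)
    [IsProbabilityMeasure P] {om : ℝ} {lam bet : 𝒴 → ℝ}
    (hlamm : Measurable lam) (hbetm : Measurable bet)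
    (hlam : ∀ y, lam y ∈ Set.Icc 0 om) (hbet : ∀ y, bet y ∈ Set.Icc 0 om)
    (hlam_one : ∫ y, lam y ∂P = 1) (hbet_one : ∫ y, bet y ∂P = 1) (n : ℕ) {ε : ℝ} (hε : 0 ≤ ε) :
    (Measure.pi fun _ : Fin n => P)
        ({x | ∑ i, lam (x i) ≤ n * (1 - ε)} ∪ {x | n * (1 + ε) ≤ ∑ i, bet (x i)})
      ≤ ENNReal.ofReal (2 * Real.exp (-(n * ε ^ 2 / om ^ 2))) := by
  refine (measure_union_le _ _).trans ?_
  rw [two_mul, ENNReal.ofReal_add (by positivity) (by positivity)]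
  gcongr
  · simpa [hlam_one] using measure_sum_le_sub_le P hlamm hlam n hε
  · simpa [hbet_one] using measure_sum_ge_add_le P hbetm hbet n hε

theorem div_sq_le_of_forall_le {ι : Type*} [Fintype ι] {l b : ι → ℝ} {l₀ b₀ om : ℝ}
    (hl₀ : 0 < l₀) (hl : ∀ i, 0 ≤ l i) (hb₀ : 0 ≤ b₀) (hb₀om : b₀ ≤ om) (hb : ∀ i, b i ≤ om) :
    (b₀ + ∑ i, b i) / (l₀ + ∑ i, l i) ^ 2 ≤ (Fintype.card ι + 1) * om / l₀ ^ 2 := by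
  have hb_sum : ∑ i, b i ≤ Fintype.card ι * om := by
    simpa using Finset.sum_le_card_nsmul Finset.univ b om fun i _ => hb i
  have hl_sum : 0 ≤ ∑ i, l i := Finset.sum_nonneg fun i _ => hl i
  have hom : 0 ≤ om := hb₀.trans hb₀om
  exact div_sq_le_div_sq (by positivity) hl₀ (by linarith) (by linarith)

theorem stmt5_general
    {𝒴 : Type*} [MeasurableSpace 𝒴] (P : Measure 𝒴) [IsProbabilityMeasure P]
    (om : ℝ) (lam bet : 𝒴 → ℝ) (hlamm : Measurable lam) (hbetm : Measurable bet)
    (hlam_pos : ∀ y, 0 < lam y) (hlam_le : ∀ y, lam y ≤ om)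
    (hbet_pos : ∀ y, 0 < bet y) (hbet_le : ∀ y, bet y ≤ om)
    (hlam_one : ∫ y, lam y ∂P = 1) (hbet_one : ∫ y, bet y ∂P = 1)
    (N : ℕ) (hN : 0 < N) (y₁ : 𝒴)
    (ε : ℝ) (hε0 : 0 < ε) (hε1 : ε < 1) :
    ∫⁻ y : Fin (N - 1) → 𝒴,
        ENNReal.ofReal ((bet y₁ + ∑ j, bet (y j)) / (lam y₁ + ∑ j, lam (y j)) ^ 2)
        ∂(Measure.pi fun _ : Fin (N - 1) => P)
      ≤ ENNReal.ofReal
          ((bet y₁ + ((N : ℝ) - 1) * (1 + ε)) /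
              (lam y₁ + ((N : ℝ) - 1) * (1 - ε)) ^ 2
            + (N : ℝ) * om / (lam y₁) ^ 2 * 2 *
                Real.exp (-(((N : ℝ) - 1) * ε ^ 2 / om ^ 2))) := by
  obtain ⟨n, rfl⟩ : ∃ n, N = n + 1 := ⟨N - 1, by omega⟩
  simp only [Nat.cast_add, Nat.cast_one, add_sub_cancel_right]
  have hlam₁ := hlam_pos y₁
  have hbet₁ := hbet_pos y₁
  have hom : 0 ≤ om := hlam₁.le.trans (hlam_le y₁)
  set B := {x : Fin n → 𝒴 | ∑ i, lam (x i) ≤ n * (1 - ε)} ∪ {x | n * (1 + ε) ≤ ∑ i, bet (x i)}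
  have hB := measure_sum_deviation_le P hlamm hbetm (fun y => ⟨(hlam_pos y).le, hlam_le y⟩)
    (fun y => ⟨(hbet_pos y).le, hbet_le y⟩) hlam_one hbet_one n hε0.le
  have hgood : ∀ x ∉ B,
      ENNReal.ofReal ((bet y₁ + ∑ i, bet (x i)) / (lam y₁ + ∑ i, lam (x i)) ^ 2)
        ≤ ENNReal.ofReal ((bet y₁ + n * (1 + ε)) / (lam y₁ + n * (1 - ε)) ^ 2) := by
    intro x hx
    simp only [B, Set.mem_union, Set.mem_ofPred_eq, not_or, not_le] at hx
    exact ENNReal.ofReal_le_ofReal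
      (div_sq_le_div_sq (by positivity) (by nlinarith) (by linarith) (by linarith))
  have hall (x : Fin n → 𝒴) :
      ENNReal.ofReal ((bet y₁ + ∑ i, bet (x i)) / (lam y₁ + ∑ i, lam (x i)) ^ 2)
        ≤ ENNReal.ofReal ((n + 1) * om / lam y₁ ^ 2) := by
    simpa using ENNReal.ofReal_le_ofReal (div_sq_le_of_forall_le hlam₁
      (fun i => (hlam_pos (x i)).le) hbet₁.le (hbet_le y₁) fun i => hbet_le (x i))
  calc _ ≤ _ := lintegral_le_add_mul_measure hgood hall
    _ ≤ ENNReal.ofReal ((bet y₁ + n * (1 + ε)) / (lam y₁ + n * (1 - ε)) ^ 2)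
          + ENNReal.ofReal ((n + 1) * om / lam y₁ ^ 2)
            * ENNReal.ofReal (2 * Real.exp (-(n * ε ^ 2 / om ^ 2))) := by
      gcongr; exact hB
    _ = _ := by
      rw [← ENNReal.ofReal_mul (by positivity),
        ← ENNReal.ofReal_add (by positivity) (by positivity)]
      ring_nf

/-- `lam`, `bet : 𝒴 → (0, ω]` are density ratios with unit `P`-integral.
With `Y₁ = y₁` fixed (with `lam y₁ > 0`) and `Y₂,…,Y_N` i.i.d. `P`, for any `0 < ε < 1`:
`E[(∑ⱼ bet (Y j)) / (∑ⱼ lam (Y j))²]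
  ≤ (bet y₁ + (N−1)(1+ε)) / (lam y₁ + (N−1)(1−ε))² + (Nω/lam y₁²)⬝2⬝exp(−(N−1)ε²/ω²)`. -/
theorem stmt5
    {𝒴 : Type*} [MeasurableSpace 𝒴] (P : Measure 𝒴) [IsProbabilityMeasure P]
    (om : ℝ) (lam bet : 𝒴 → ℝ) (hlamm : Measurable lam) (hbetm : Measurable bet)
    (hlam_pos : ∀ y, 0 < lam y) (hlam_le : ∀ y, lam y ≤ om)
    (hbet_pos : ∀ y, 0 < bet y) (hbet_le : ∀ y, bet y ≤ om)
    (hlam_one : ∫ y, lam y ∂P = 1) (hbet_one : ∫ y, bet y ∂P = 1)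
    (N : ℕ) (hN : 0 < N) (y₁ : 𝒴) (hy₁ : 0 < lam y₁)
    (ε : ℝ) (hε0 : 0 < ε) (hε1 : ε < 1) :
    ∫⁻ y : Fin (N - 1) → 𝒴,
        ENNReal.ofReal ((bet y₁ + ∑ j, bet (y j)) / (lam y₁ + ∑ j, lam (y j)) ^ 2)
        ∂(Measure.pi fun _ : Fin (N - 1) => P)
      ≤ ENNReal.ofReal
          ((bet y₁ + ((N : ℝ) - 1) * (1 + ε)) /
              (lam y₁ + ((N : ℝ) - 1) * (1 - ε)) ^ 2
            + (N : ℝ) * om / (lam y₁) ^ 2 * 2 *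
                Real.exp (-(((N : ℝ) - 1) * ε ^ 2 / om ^ 2))) :=
  stmt5_general P om lam bet hlamm hbetm hlam_pos hlam_le hbet_pos hbet_le hlam_one hbet_one N hN y₁
    ε hε0 hε1
end

section
/- Let P and Q be probability measures on a measurable space 𝒴 with Q ≪ P and density r = dQ/dP satisfying 0 < r(y) ≤ ω for P-a.e. y. Let Y_1,…,Y_N be i.i.d. with law P. Then E[ (Σ_{i=1}^N r(Y_i) log₂ r(Y_i)) / (Σ_{j=1}^N r(Y_j)) ] ≤ D(Q‖P) + (6(ω−1)·log₂ ω)/N, where D(Q‖P) = E_{Y∼P}[r(Y) log₂ r(Y)]. -/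
/-!
Write `f = r log₂ r`, `F = ∑ f(Yᵢ)` and `R = ∑ r(Yᵢ)`. Since `F / R ≤ log₂ ω` and
`1 / R = (2 / N - R / N²) + (R / N - 1)² / R`, the estimate is bounded pointwise by
`2F / N - FR / N² + log₂ ω · (R / N - 1)²`, a quadratic polynomial in the sample whose
expectation is computed exactly by independence. Its first part has expectation
`D + (D - E_P[f r]) / N ≤ D`, because `f ≤ f r` pointwise; its second part has expectation
`log₂ ω · (E_P[r²] - 1) / N ≤ log₂ ω · (ω - 1) / N`. If the estimate is not integrable its
integral is `0` and the bound is Gibbs' inequality `D ≥ 0`.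
-/

open MeasureTheory ProbabilityTheory Real

namespace Real

variable {b x : ℝ}

lemma self_sub_one_div_log_le_mul_logb (hb : 1 < b) (hx : 0 ≤ x) :
    (x - 1) / log b ≤ x * logb b x := by
  rw [logb, mul_div_assoc']
  exact div_le_div_of_nonneg_right (self_sub_one_le_mul_log hx) (log_pos hb).le

lemma mul_logb_le_mul_logb_mul_self (hb : 1 < b) (hx : 0 ≤ x) :
    x * logb b x ≤ x * logb b x * x := by
  rcases le_total 1 x with h1 | h1
  · exact le_mul_of_one_le_right (mul_nonneg hx (logb_nonneg hb h1)) h1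
  · exact le_mul_of_le_one_right (mul_nonpos_of_nonneg_of_nonpos hx (logb_nonpos hb hx h1)) h1

lemma mul_logb_le_logb_mul {y : ℝ} (hb : 1 < b) (hx : 0 < x) (hxy : x ≤ y) :
    x * logb b x ≤ logb b y * x := by
  rw [mul_comm]
  exact mul_le_mul_of_nonneg_right (logb_le_logb_of_le hb hx hxy) hx.le

end Real

/-- `1 / R = (2 / n - R / n ^ 2) + (R / n - 1) ^ 2 / R`: the tangent line of `t ↦ 1 / t` at `n`
plus the exact remainder. -/
lemma div_le_tangent_add_mul_sq {F R n L : ℝ} (hR : 0 < R) (hn : n ≠ 0) (hFR : F ≤ L * R) :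
    F / R ≤ 2 / n * F - 1 / n ^ 2 * (F * R) + L * (1 / n ^ 2 * (R * R) - 2 / n * R + 1) := by
  have hFRL : F / R ≤ L := (div_le_iff₀ hR).2 hFR
  calc F / R = 2 / n * F - 1 / n ^ 2 * (F * R) + F / R * (R / n - 1) ^ 2 := by
        field_simp
        ring
    _ ≤ 2 / n * F - 1 / n ^ 2 * (F * R) + L * (R / n - 1) ^ 2 := by gcongr
    _ = 2 / n * F - 1 / n ^ 2 * (F * R) + L * (1 / n ^ 2 * (R * R) - 2 / n * R + 1) := by
        field_simp
        ring

section IIDSums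

variable {Ω ι : Type*} [MeasurableSpace Ω] {P : Measure Ω} [IsProbabilityMeasure P] [Fintype ι]

lemma indepFun_eval_pi {i j : ι} (hij : i ≠ j) :
    IndepFun (fun x : ι → Ω => x i) (fun x => x j) (Measure.pi fun _ => P) :=
  (iIndepFun_pi (X := fun _ => id) fun _ => aemeasurable_id).indepFun hij

lemma integral_comp_eval_mul_comp_eval_of_ne {i j : ι} (hij : i ≠ j) {g h : Ω → ℝ}
    (hg : AEStronglyMeasurable g P) (hh : AEStronglyMeasurable h P) :
    ∫ x, g (x i) * h (x j) ∂Measure.pi (fun _ => P) = (∫ y, g y ∂P) * ∫ y, h y ∂P := by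
  have hg' : AEStronglyMeasurable g ((Measure.pi fun _ => P).map fun x => x i) := by
    rwa [(measurePreserving_eval (fun _ => P) i).map_eq]
  have hh' : AEStronglyMeasurable h ((Measure.pi fun _ => P).map fun x => x j) := by
    rwa [(measurePreserving_eval (fun _ => P) j).map_eq]
  rw [(indepFun_eval_pi hij).integral_fun_comp_mul_comp (measurable_pi_apply i).aemeasurable
    (measurable_pi_apply j).aemeasurable hg' hh', integral_comp_eval hg, integral_comp_eval hh]

variable {g h : Ω → ℝ}

lemma integrable_comp_eval_mul_comp_eval (hgm : Measurable g) (hhm : Measurable h)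
    (hg : Integrable g P) (hh : Integrable h P) (hgh : Integrable (fun y => g y * h y) P)
    (i j : ι) : Integrable (fun x => g (x i) * h (x j)) (Measure.pi fun _ => P) := by
  by_cases hij : i = j
  · subst hij
    exact integrable_comp_eval (μ := fun _ => P) hgh
  · exact ((indepFun_eval_pi hij).comp hgm hhm).integrable_mul
      (integrable_comp_eval (μ := fun _ => P) hg) (integrable_comp_eval (μ := fun _ => P) hh)

lemma integrable_sum_comp_eval (hg : Integrable g P) :
    Integrable (fun x => ∑ i, g (x i)) (Measure.pi fun _ : ι => P) :=
  integrable_finsetSum _ fun _ _ => integrable_comp_eval (μ := fun _ => P) hg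

lemma integrable_sum_comp_eval_mul_sum_comp_eval (hgm : Measurable g) (hhm : Measurable h)
    (hg : Integrable g P) (hh : Integrable h P) (hgh : Integrable (fun y => g y * h y) P) :
    Integrable (fun x => (∑ i, g (x i)) * ∑ j, h (x j)) (Measure.pi fun _ : ι => P) := by
  simp only [Finset.sum_mul_sum]
  exact integrable_finsetSum _ fun i _ => integrable_finsetSum _ fun j _ =>
    integrable_comp_eval_mul_comp_eval hgm hhm hg hh hgh i j

lemma integral_sum_comp_eval (hg : Integrable g P) :
    ∫ x, ∑ i, g (x i) ∂Measure.pi (fun _ : ι => P) = Fintype.card ι * ∫ y, g y ∂P := by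
  rw [integral_finsetSum _ fun i _ => integrable_comp_eval (μ := fun _ => P) hg]
  simp [integral_comp_eval (μ := fun _ => P) hg.aestronglyMeasurable]

lemma integral_sum_comp_eval_mul_sum_comp_eval (hgm : Measurable g) (hhm : Measurable h)
    (hg : Integrable g P) (hh : Integrable h P) (hgh : Integrable (fun y => g y * h y) P) :
    ∫ x, (∑ i, g (x i)) * ∑ j, h (x j) ∂Measure.pi (fun _ : ι => P)
      = Fintype.card ι * ∫ y, g y * h y ∂P
        + (Fintype.card ι ^ 2 - Fintype.card ι) * ((∫ y, g y ∂P) * ∫ y, h y ∂P) := by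
  classical
  have hint := integrable_comp_eval_mul_comp_eval hgm hhm hg hh hgh (P := P) (ι := ι)
  have hcross (i j : ι) : ∫ x, g (x i) * h (x j) ∂Measure.pi (fun _ => P)
      = (∫ y, g y ∂P) * (∫ y, h y ∂P)
        + if i = j then ∫ y, g y * h y ∂P - (∫ y, g y ∂P) * ∫ y, h y ∂P else 0 := by
    split_ifs with hij
    · subst hij
      rw [integral_comp_eval (μ := fun _ => P) (f := fun y => g y * h y) hgh.aestronglyMeasurable]
      ring
    · rw [integral_comp_eval_mul_comp_eval_of_ne hij hg.aestronglyMeasurable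
        hh.aestronglyMeasurable, add_zero]
  simp_rw [Finset.sum_mul_sum]
  rw [integral_finsetSum _ fun i _ => integrable_finsetSum _ fun j _ => hint i j]
  simp only [integral_finsetSum _ fun j _ => hint _ j, hcross, Finset.sum_add_distrib,
    Finset.sum_ite_eq, Finset.sum_const, Finset.card_univ, Finset.mem_univ, if_true, nsmul_eq_mul]
  ring

end IIDSums

section SelfNormalized

variable {Ω ι : Type*} [MeasurableSpace Ω] {P : Measure Ω} [IsProbabilityMeasure P] [Fintype ι]
  [Nonempty ι] {f r : Ω → ℝ} {L : ℝ}

lemma ae_sum_div_sum_le_tangent_add_mul_sq (hr0 : ∀ᵐ y ∂P, 0 < r y)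
    (hfL : ∀ᵐ y ∂P, f y ≤ L * r y) :
    ∀ᵐ x ∂Measure.pi (fun _ : ι => P),
      let n := (Fintype.card ι : ℝ)
      let F := ∑ i, f (x i)
      let R := ∑ i, r (x i)
      F / R ≤ 2 / n * F - 1 / n ^ 2 * (F * R) + L * (1 / n ^ 2 * (R * R) - 2 / n * R + 1) := by
  have hcoord : ∀ᵐ x ∂Measure.pi (fun _ => P), ∀ i : ι, 0 < r (x i) ∧ f (x i) ≤ L * r (x i) :=
    ae_all_iff.2 fun i =>
      (measurePreserving_eval (fun _ => P) i).quasiMeasurePreserving.ae (hr0.and hfL)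
  filter_upwards [hcoord] with x hx
  refine div_le_tangent_add_mul_sq (Finset.sum_pos (fun i _ => (hx i).1) Finset.univ_nonempty)
    (Nat.cast_ne_zero.2 Fintype.card_ne_zero) ?_
  rw [Finset.mul_sum]
  exact Finset.sum_le_sum fun i _ => (hx i).2

theorem integral_sum_div_sum_le (hfm : Measurable f) (hrm : Measurable r)
    (hf : Integrable f P) (hr : Integrable r P) (hfr : Integrable (fun y => f y * r y) P)
    (hrr : Integrable (fun y => r y * r y) P) (hr1 : ∫ y, r y ∂P = 1)
    (hr0 : ∀ᵐ y ∂P, 0 < r y) (hfL : ∀ᵐ y ∂P, f y ≤ L * r y)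
    (hint : Integrable (fun x : ι → Ω => (∑ i, f (x i)) / ∑ i, r (x i))
      (Measure.pi fun _ => P)) :
    ∫ x : ι → Ω, (∑ i, f (x i)) / (∑ i, r (x i)) ∂Measure.pi (fun _ => P)
      ≤ ∫ y, f y ∂P + (∫ y, f y ∂P - ∫ y, f y * r y ∂P + L * (∫ y, r y * r y ∂P - 1))
          / Fintype.card ι := by
  set n := (Fintype.card ι : ℝ)
  have hn : 0 < n := Nat.cast_pos.2 Fintype.card_pos
  set F := fun x : ι → Ω => ∑ i, f (x i)
  set R := fun x : ι → Ω => ∑ i, r (x i)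
  have hF : Integrable (fun x => 2 / n * F x) (Measure.pi fun _ => P) :=
    (integrable_sum_comp_eval hf).const_mul _
  have hR : Integrable (fun x => 2 / n * R x) (Measure.pi fun _ => P) :=
    (integrable_sum_comp_eval hr).const_mul _
  have hFR : Integrable (fun x => 1 / n ^ 2 * (F x * R x)) (Measure.pi fun _ => P) :=
    (integrable_sum_comp_eval_mul_sum_comp_eval hfm hrm hf hr hfr).const_mul _
  have hRR : Integrable (fun x => 1 / n ^ 2 * (R x * R x)) (Measure.pi fun _ => P) :=
    (integrable_sum_comp_eval_mul_sum_comp_eval hrm hrm hr hr hrr).const_mul _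
  have hG : Integrable (fun x => 2 / n * F x - 1 / n ^ 2 * (F x * R x))
      (Measure.pi fun _ => P) := hF.sub hFR
  have hD : Integrable (fun x => 1 / n ^ 2 * (R x * R x) - 2 / n * R x)
      (Measure.pi fun _ => P) := hRR.sub hR
  have hLD : Integrable (fun x => L * (1 / n ^ 2 * (R x * R x) - 2 / n * R x + 1))
      (Measure.pi fun _ => P) := (hD.add (integrable_const 1)).const_mul L
  calc ∫ x, F x / R x ∂Measure.pi (fun _ => P)
      ≤ ∫ x, 2 / n * F x - 1 / n ^ 2 * (F x * R x)
          + L * (1 / n ^ 2 * (R x * R x) - 2 / n * R x + 1) ∂Measure.pi (fun _ => P) :=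
        integral_mono_ae hint (hG.add hLD) (ae_sum_div_sum_le_tangent_add_mul_sq hr0 hfL)
    _ = _ := by
      rw [integral_add hG hLD, integral_sub hF hFR, integral_const_mul L,
        integral_add hD (integrable_const 1), integral_sub hRR hR]
      simp only [integral_const_mul, integral_const, probReal_univ, smul_eq_mul, one_mul, F, R,
        integral_sum_comp_eval hf, integral_sum_comp_eval hr,
        integral_sum_comp_eval_mul_sum_comp_eval hfm hrm hf hr hfr,
        integral_sum_comp_eval_mul_sum_comp_eval hrm hrm hr hr hrr, hr1]
      field_simp
      ring

end SelfNormalized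

section DensityRatio

variable {Ω : Type*} [MeasurableSpace Ω] {P : Measure Ω} {r : Ω → ℝ}

lemma integral_eq_one_of_isProbabilityMeasure_withDensity (hrm : AEStronglyMeasurable r P)
    (hr0 : 0 ≤ᵐ[P] r) [IsProbabilityMeasure (P.withDensity fun y => ENNReal.ofReal (r y))] :
    ∫ y, r y ∂P = 1 := by
  have h := measure_univ (μ := P.withDensity fun y => ENNReal.ofReal (r y))
  rw [withDensity_apply _ MeasurableSet.univ, Measure.restrict_univ] at h
  rw [integral_eq_lintegral_of_nonneg_ae hr0 hrm, h, ENNReal.toReal_one]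

variable {b ω : ℝ}

lemma integral_mul_logb_le_integral_mul_logb_mul_self (hb : 1 < b)
    (hf : Integrable (fun y => r y * logb b (r y)) P)
    (hfr : Integrable (fun y => r y * logb b (r y) * r y) P) (hr0 : 0 ≤ᵐ[P] r) :
    ∫ y, r y * logb b (r y) ∂P ≤ ∫ y, r y * logb b (r y) * r y ∂P :=
  integral_mono_ae hf hfr (hr0.mono fun _ => mul_logb_le_mul_logb_mul_self hb)

lemma integral_mul_self_le (hr : Integrable r P) (hrr : Integrable (fun y => r y * r y) P)
    (hr1 : ∫ y, r y ∂P = 1) (hr0 : 0 ≤ᵐ[P] r) (hrω : ∀ᵐ y ∂P, r y ≤ ω) :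
    ∫ y, r y * r y ∂P ≤ ω := by
  simpa [integral_const_mul, hr1] using integral_mono_ae hrr (hr.const_mul ω)
    (hr0.and hrω |>.mono fun y hy => mul_le_mul_of_nonneg_right hy.2 hy.1)

variable [IsProbabilityMeasure P]

lemma one_le_of_integral_eq_one (hr : Integrable r P) (hr1 : ∫ y, r y ∂P = 1)
    (hrω : ∀ᵐ y ∂P, r y ≤ ω) : 1 ≤ ω := by
  simpa [hr1] using integral_mono_ae hr (integrable_const ω) hrω

lemma integrable_mul_logb (hb : 1 < b) (hrm : Measurable r) (hr : Integrable r P)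
    (hrω : ∀ᵐ y ∂P, 0 < r y ∧ r y ≤ ω) : Integrable (fun y => r y * logb b (r y)) P :=
  integrable_of_le_of_le (by simp only [logb]; fun_prop)
    (hrω.mono fun y hy => self_sub_one_div_log_le_mul_logb hb hy.1.le)
    (hrω.mono fun y hy => mul_logb_le_logb_mul hb hy.1 hy.2)
    ((hr.sub (integrable_const 1)).div_const _) (hr.const_mul _)

lemma integral_mul_logb_nonneg (hb : 1 < b) (hr : Integrable r P) (hr1 : ∫ y, r y ∂P = 1)
    (hr0 : 0 ≤ᵐ[P] r) (hf : Integrable (fun y => r y * logb b (r y)) P) :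
    0 ≤ ∫ y, r y * logb b (r y) ∂P := by
  have hGibbs : ∫ y, (r y - 1) / log b ∂P = 0 := by
    rw [integral_div, integral_sub hr (integrable_const 1), hr1]
    simp
  rw [← hGibbs]
  exact integral_mono_ae ((hr.sub (integrable_const 1)).div_const _) hf
    (hr0.mono fun _ => self_sub_one_div_log_le_mul_logb hb)

end DensityRatio

/-- `Q ≪ P` with density `r = dQ/dP ∈ (0, ω]` `P`-a.e.
With `Y₁,…,Y_N` i.i.d. `P`, the self-normalized importance sampling estimate of the
KL divergence is upward biased by at most `6(ω−1)log₂ω/N`: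
`E[(∑ᵢ r (Y i) log₂ r (Y i))/(∑ⱼ r (Y j))] ≤ D(Q‖P) + 6(ω−1)log₂ω/N`,
where `D(Q‖P) = E_P[r log₂ r]`. -/
theorem stmt13
    {𝒴 : Type*} [MeasurableSpace 𝒴] (P Q : Measure 𝒴)
    [IsProbabilityMeasure P] [IsProbabilityMeasure Q]
    (om : ℝ) (r : 𝒴 → ℝ) (hrm : Measurable r)
    (hQ : Q = P.withDensity (fun y => ENNReal.ofReal (r y)))
    (hr : ∀ᵐ y ∂P, 0 < r y ∧ r y ≤ om)
    (N : ℕ) (hN : 0 < N) :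
    ∫ y : Fin N → 𝒴,
        (∑ i, r (y i) * Real.logb 2 (r (y i))) / (∑ j, r (y j))
        ∂(Measure.pi fun _ : Fin N => P)
      ≤ (∫ y, r y * Real.logb 2 (r y) ∂P) + 6 * (om - 1) * Real.logb 2 om / N := by
  subst hQ
  have hr0 : 0 ≤ᵐ[P] r := hr.mono fun y hy => hy.1.le
  have hr_bdd : ∀ᵐ y ∂P, ‖r y‖ ≤ om := hr.mono fun y hy => (norm_of_nonneg hy.1.le).trans_le hy.2
  have hrInt : Integrable r P := .of_bound hrm.aestronglyMeasurable om hr_bdd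
  have hr1 := integral_eq_one_of_isProbabilityMeasure_withDensity hrm.aestronglyMeasurable hr0
  have hom := one_le_of_integral_eq_one hrInt hr1 (hr.mono fun _ => And.right)
  have hL : 0 ≤ logb 2 om := logb_nonneg one_lt_two hom
  have hfInt := integrable_mul_logb one_lt_two hrm hrInt hr
  by_cases hint : Integrable (fun y : Fin N → 𝒴 =>
      (∑ i, r (y i) * logb 2 (r (y i))) / ∑ j, r (y j)) (Measure.pi fun _ => P)
  · have : Nonempty (Fin N) := ⟨⟨0, hN⟩⟩
    have hfr := hfInt.mul_bdd hrm.aestronglyMeasurable hr_bdd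
    have hrr := hrInt.mul_bdd hrm.aestronglyMeasurable hr_bdd
    have hcov := integral_mul_logb_le_integral_mul_logb_mul_self one_lt_two hfInt hfr hr0
    have hsecond := integral_mul_self_le hrInt hrr hr1 hr0 (hr.mono fun _ => And.right)
    refine (integral_sum_div_sum_le (by simp only [logb]; fun_prop) hrm hfInt hrInt hfr hrr hr1
      (hr.mono fun _ => And.left) (hr.mono fun y hy => mul_logb_le_logb_mul one_lt_two hy.1 hy.2)
      hint).trans ?_
    rw [Fintype.card_fin]
    gcongr
    nlinarith
  · rw [integral_undef hint]
    have hKL := integral_mul_logb_nonneg one_lt_two hrInt hr1 hr0 hfInt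
    have : 0 ≤ 6 * (om - 1) * logb 2 om / N := by
      have : 0 ≤ om - 1 := sub_nonneg.2 hom
      positivity
    linarith
end
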